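/- arXiv:2412.13398 — 4 statements merged into one kernel-verified Lean document; each statement's English description precedes it below -/
import Mathlib

section
/- Algorithmic soundness (success case): if the matching state machine, started in the running state with the empty substitution, empty backtracking stack, and continuation [match p against t], reaches the state success(θ) after one or more steps, then p matches t under θ in the declarative semantics. -/
namespace PyPM
/-- Terms over a signature of function symbols (names with lists of arguments). -/
inductive Tm where
  | app : String → List Tm → Tm


/-- Basic patterns: variables, function applications, and alternates. -/
inductive Pat where
  | var : String → Pat
  | app : String → List Pat → Pat
  | alt : Pat → Pat → Pat

/-- Substitutions: finite maps from variables to terms (modeled as partial functions). -/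
abbrev Subst := String → Option Tm

def emptySubst : Subst := fun _ => none

def Subst.update (θ : Subst) (x : String) (t : Tm) : Subst :=
  fun y => if y = x then some t else θ y

/-- θ ⊆ θ' : every binding of θ is a binding of θ'. -/
def Subst.le (θ θ' : Subst) : Prop := ∀ x t, θ x = some t → θ' x = some t

/-- Declarative matching semantics: θ ⊢ p ≈ t. -/
inductive Matches : Subst → Pat → Tm → Prop where
  | var {θ : Subst} {x : String} {t : Tm} :
      θ x = some t → Matches θ (.var x) t
  | app {θ : Subst} {f : String} {ps : List Pat} {ts : List Tm}
      (hlen : ps.length = ts.length)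
      (hargs : ∀ i (h1 : i < ps.length) (h2 : i < ts.length), Matches θ ps[i] ts[i]) :
      Matches θ (.app f ps) (.app f ts)
  | alt1 {θ : Subst} {p p' : Pat} {t : Tm} :
      Matches θ p t → Matches θ (.alt p p') t
  | alt2 {θ : Subst} {p p' : Pat} {t : Tm} :
      Matches θ p' t → Matches θ (.alt p p') t

/-- Actions in the machine continuation. -/
inductive Action where
  | doMatch : Pat → Tm → Action

abbrev Cont := List Action
abbrev Frame := Subst × Cont
abbrev Stack := List Frame

/-- Machine states. -/
inductive St where
  | success : Subst → St
  | failure : St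
  | running : Subst → Stack → Cont → St

/-- Backtracking: pop the stack, or fail if it is empty. -/
def backtrack : Stack → St
  | [] => .failure
  | (θ, k) :: stk => .running θ stk k

/-- The step relation of the algorithmic matching machine. -/
inductive Step : St → St → Prop where
  | success {θ stk} :
      Step (.running θ stk []) (.success θ)
  | varBind {θ : Subst} {stk x t k} :
      θ x = none →
      Step (.running θ stk (.doMatch (.var x) t :: k)) (.running (θ.update x t) stk k)
  | varBound {θ : Subst} {stk x t k} :
      θ x = some t →
      Step (.running θ stk (.doMatch (.var x) t :: k)) (.running θ stk k)
  | varConflict {θ : Subst} {stk x t t' k} :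
      θ x = some t' → t' ≠ t →
      Step (.running θ stk (.doMatch (.var x) t :: k)) (backtrack stk)
  | fn {θ stk f ps ts k} :
      ps.length = ts.length →
      Step (.running θ stk (.doMatch (.app f ps) (.app f ts) :: k))
           (.running θ stk (((ps.zip ts).map fun pt => .doMatch pt.1 pt.2) ++ k))
  | fnConflict {θ stk f g ps ts k} :
      f ≠ g ∨ ps.length ≠ ts.length →
      Step (.running θ stk (.doMatch (.app f ps) (.app g ts) :: k)) (backtrack stk)
  | alt {θ stk p p' t k} :
      Step (.running θ stk (.doMatch (.alt p p') t :: k))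
           (.running θ ((θ, .doMatch p' t :: k) :: stk) (.doMatch p t :: k))

end PyPM

open PyPM

/-! Read a run backwards. Call a frame `(θ₀, k)` sound for the final substitution `θ` if `θ₀ ⊆ θ`
and every pending match in `k` already holds under `θ`. Each machine step preserves, backwards,
the invariant "the current frame or some frame on the stack is sound": binding a variable only
shrinks the substitution, an application match is justified by its argument matches, an
alternation by either branch, and backtracking just resumes a stacked frame. The final state
`success θ` satisfies it trivially, so the initial frame `(∅, [p ≈ t])` is sound. -/

namespace PyPM

theorem Subst.le_refl (θ : Subst) : θ.le θ := fun _ _ => id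

theorem Subst.le_trans {θ₁ θ₂ θ₃ : Subst} (h₁₂ : θ₁.le θ₂) (h₂₃ : θ₂.le θ₃) : θ₁.le θ₃ :=
  fun x t hx => h₂₃ x t (h₁₂ x t hx)

theorem Subst.update_self (θ : Subst) (x : String) (t : Tm) : θ.update x t x = some t := by
  simp [Subst.update]

theorem Subst.le_update {θ : Subst} {x : String} (hx : θ x = none) (t : Tm) :
    θ.le (θ.update x t) := by
  intro y u hy
  have hyx : y ≠ x := by rintro rfl; simp [hx] at hy
  simpa [Subst.update, hyx] using hy

theorem matches_app_of_forall_zip {θ : Subst} {f : String} {ps : List Pat} {ts : List Tm}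
    (hlen : ps.length = ts.length) (h : ∀ pt ∈ ps.zip ts, Matches θ pt.1 pt.2) :
    Matches θ (.app f ps) (.app f ts) :=
  Matches.app hlen fun i h₁ h₂ =>
    h (ps[i], ts[i]) (List.mem_iff_getElem.2 ⟨i, by simp [h₁, h₂], List.getElem_zip⟩)

def Action.Holds (θ : Subst) : Action → Prop
  | .doMatch p t => Matches θ p t

def Frame.Sound (θ : Subst) (fr : Frame) : Prop :=
  fr.1.le θ ∧ ∀ a ∈ fr.2, a.Holds θ

theorem Frame.sound_cons {θ θ₀ : Subst} {a : Action} {k : Cont} :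
    Frame.Sound θ (θ₀, a :: k) ↔ a.Holds θ ∧ Frame.Sound θ (θ₀, k) := by
  simp only [Frame.Sound, List.forall_mem_cons]
  tauto

theorem Frame.sound_append {θ θ₀ : Subst} {k₁ k₂ : Cont} :
    Frame.Sound θ (θ₀, k₁ ++ k₂) ↔ (∀ a ∈ k₁, a.Holds θ) ∧ Frame.Sound θ (θ₀, k₂) := by
  simp only [Frame.Sound, List.forall_mem_append]
  tauto

def St.Sound (θ : Subst) : St → Prop
  | .success θ' => θ' = θ
  | .failure => False
  | .running θ₀ stk k => Frame.Sound θ (θ₀, k) ∨ ∃ fr ∈ stk, Frame.Sound θ fr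

theorem St.Sound.running_of_frame {θ θ₀ θ₀' : Subst} {stk : Stack} {k k' : Cont}
    (hfr : Frame.Sound θ (θ₀', k') → Frame.Sound θ (θ₀, k))
    (h : (St.running θ₀' stk k').Sound θ) : (St.running θ₀ stk k).Sound θ :=
  h.imp_left hfr

theorem St.Sound.running_of_backtrack {θ θ₀ : Subst} {stk : Stack} {k : Cont}
    (h : (backtrack stk).Sound θ) : (St.running θ₀ stk k).Sound θ := by
  match stk, h with
  | (θ₁, k₁) :: _, .inl hfr => exact .inr ⟨(θ₁, k₁), List.mem_cons_self, hfr⟩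
  | _ :: _, .inr ⟨fr, hmem, hfr⟩ => exact .inr ⟨fr, List.mem_cons_of_mem _ hmem, hfr⟩

theorem St.Sound.of_step {θ : Subst} {s s' : St} (hs : Step s s') (h : s'.Sound θ) :
    s.Sound θ := by
  cases hs with
  | success =>
    subst h
    exact .inl ⟨Subst.le_refl _, nofun⟩
  | @varBind θ₀ _ x t _ hx =>
    refine h.running_of_frame fun ⟨hle, hk⟩ => ?_
    have hle' := Subst.le_trans (Subst.le_update hx t) hle
    exact Frame.sound_cons.2 ⟨.var (hle x t (Subst.update_self θ₀ x t)), hle', hk⟩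
  | varBound hx =>
    exact h.running_of_frame fun hfr => Frame.sound_cons.2 ⟨.var (hfr.1 _ _ hx), hfr⟩
  | varConflict => exact h.running_of_backtrack
  | fnConflict => exact h.running_of_backtrack
  | fn hlen =>
    refine h.running_of_frame fun hfr => ?_
    obtain ⟨hargs, hk⟩ := Frame.sound_append.1 hfr
    refine Frame.sound_cons.2 ⟨matches_app_of_forall_zip hlen fun pt hpt => ?_, hk⟩
    exact hargs _ (List.mem_map_of_mem hpt)
  | alt =>
    rcases h with hfr | ⟨fr, hmem | ⟨_, hmem⟩, hfr⟩
    · obtain ⟨hp, hk⟩ := Frame.sound_cons.1 hfr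
      exact .inl (Frame.sound_cons.2 ⟨.alt1 hp, hk⟩)
    · obtain ⟨hp', hk⟩ := Frame.sound_cons.1 hfr
      exact .inl (Frame.sound_cons.2 ⟨.alt2 hp', hk⟩)
    · exact .inr ⟨fr, hmem, hfr⟩

theorem St.Sound.of_transGen {θ : Subst} {s : St}
    (h : Relation.TransGen Step s (.success θ)) : s.Sound θ := by
  induction h using Relation.TransGen.head_induction_on with
  | single hs => exact .of_step hs rfl
  | head hs _ ih => exact ih.of_step hs

end PyPM

/-- Algorithmic soundness (success case). -/
theorem alg_soundness_success {p : Pat} {t : Tm} {θ : Subst}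
    (h : Relation.TransGen Step (.running emptySubst [] [.doMatch p t]) (.success θ)) :
    Matches θ p t := by
  rcases St.Sound.of_transGen h with hfr | ⟨_, hmem, _⟩
  · exact (Frame.sound_cons.1 hfr).1
  · simp at hmem
end

section
/- Termination for alternate-free patterns: if the pattern p contains no alternates, no existentials, no match constraints, and no recursion, then the matching machine started from (∅, [], [match p t]) always terminates, reaching either success(θ) for some θ or failure, and the backtracking stack remains empty in every intermediate state. -/
namespace PyPM

/-- Alternate-free patterns: built only from variables and function applications. -/
inductive AltFree : Pat → Prop where
  | var {x : String} : AltFree (.var x)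
  | app {f : String} {ps : List Pat} : (∀ p ∈ ps, AltFree p) → AltFree (.app f ps)

/-- `VarIn x p`: the variable x occurs in the pattern p. -/
inductive VarIn (x : String) : Pat → Prop where
  | var : VarIn x (.var x)
  | app {f : String} {ps : List Pat} {p : Pat} : p ∈ ps → VarIn x p → VarIn x (.app f ps)
  | alt1 {p p' : Pat} : VarIn x p → VarIn x (.alt p p')
  | alt2 {p p' : Pat} : VarIn x p' → VarIn x (.alt p p')

/-- Number of occurrences of the variable x in a pattern. -/
def varCount (x : String) : Pat → Nat
  | .var y => if y = x then 1 else 0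
  | .app _ ps => (ps.attach.map (fun q => varCount x q.1)).sum
  | .alt p q => varCount x p + varCount x q
  decreasing_by
  all_goals first
    | (have := List.sizeOf_lt_of_mem q.2; simp only [Pat.app.sizeOf_spec]; omega)
    | (simp only [Pat.alt.sizeOf_spec]; omega)

/-- A pattern is linear if each variable occurs at most once. -/
def Linear (p : Pat) : Prop := ∀ x, varCount x p ≤ 1

/-- Reading a term as a (ground, alternate-free) pattern. -/
def Tm.toPat : Tm → Pat
  | .app f ts => .app f (ts.attach.map (fun q => Tm.toPat q.1))
  decreasing_by
  have := List.sizeOf_lt_of_mem q.2; simp only [Tm.app.sizeOf_spec]; omega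

/-- Ground, alternate-free patterns: only the function-application constructor. -/
inductive GroundAltFree : Pat → Prop where
  | app {f : String} {ps : List Pat} : (∀ p ∈ ps, GroundAltFree p) → GroundAltFree (.app f ps)

end PyPM


/-! The only rule that pushes onto the stack is the alternate rule, so on alternate-free
continuations the stack stays empty and a conflict means immediate failure. Every other step
either stops or strictly shrinks the total size of the patterns still to be matched
(a function pattern is replaced by its arguments), so the machine terminates. -/

namespace PyPM

def Pat.size : Pat → ℕ
  | .var _ => 1
  | .app _ ps => 1 + (ps.attach.map fun q => Pat.size q.1).sum
  | .alt p q => 1 + p.size + q.size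
  decreasing_by
  all_goals first
    | (have := List.sizeOf_lt_of_mem q.2; simp only [Pat.app.sizeOf_spec]; omega)
    | (simp only [Pat.alt.sizeOf_spec]; omega)

theorem Pat.size_app (f : String) (ps : List Pat) :
    (Pat.app f ps).size = 1 + (ps.map Pat.size).sum := by
  rw [Pat.size]
  simp

def Action.pat : Action → Pat
  | .doMatch p _ => p

def Cont.size (k : Cont) : ℕ := ((k.map Action.pat).map Pat.size).sum

def Cont.AltFree (k : Cont) : Prop := ∀ p ∈ k.map Action.pat, PyPM.AltFree p

theorem map_pat_zip_doMatch {ps : List Pat} {ts : List Tm} (h : ps.length = ts.length) :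
    ((ps.zip ts).map fun pt => Action.doMatch pt.1 pt.2).map Action.pat = ps := by
  rw [List.map_map]
  exact List.map_fst_zip h.le

theorem Step.exists (θ : Subst) (stk : Stack) (k : Cont) : ∃ st, Step (.running θ stk k) st := by
  rcases k with _ | ⟨⟨p, t⟩, k⟩
  · exact ⟨_, .success⟩
  rcases p with x | ⟨f, ps⟩ | ⟨p, p'⟩
  · rcases hx : θ x with _ | t'
    · exact ⟨_, .varBind hx⟩
    · by_cases ht : t' = t
      · exact ⟨_, .varBound (ht ▸ hx)⟩
      · exact ⟨_, .varConflict hx ht⟩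
  · obtain ⟨g, ts⟩ := t
    by_cases h : f = g ∧ ps.length = ts.length
    · obtain ⟨rfl, hlen⟩ := h
      exact ⟨_, .fn hlen⟩
    · exact ⟨_, .fnConflict (not_and_or.mp h)⟩
  · exact ⟨_, .alt⟩

def AltFreeState : St → Prop
  | .running _ stk k => stk = [] ∧ Cont.AltFree k
  | _ => True

def St.measure : St → ℕ
  | .running _ _ k => Cont.size k + 1
  | _ => 0

theorem Step.altFreeState_measure_lt {st st' : St} (h : Step st st') (hst : AltFreeState st) :
    AltFreeState st' ∧ st'.measure < st.measure := by
  rcases st with _ | _ | ⟨θ, stk, k⟩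
  · nomatch h
  · nomatch h
  obtain ⟨rfl, hk⟩ := hst
  cases h with
  | success => exact ⟨trivial, Nat.succ_pos _⟩
  | varBind _ | varBound _ =>
    refine ⟨⟨rfl, fun p hp => hk p (List.mem_cons_of_mem _ hp)⟩, ?_⟩
    simp [St.measure, Cont.size, Action.pat, Pat.size]
  | varConflict _ _ | fnConflict _ => exact ⟨trivial, Nat.succ_pos _⟩
  | @fn _ _ f ps ts k hlen =>
    obtain _ | ⟨hps⟩ : AltFree (.app f ps) := hk _ List.mem_cons_self
    refine ⟨⟨rfl, ?_⟩, ?_⟩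
    · intro p hp
      rw [List.map_append, map_pat_zip_doMatch hlen, List.mem_append] at hp
      exact hp.elim (hps p) (fun hp => hk p (List.mem_cons_of_mem _ hp))
    · simp only [St.measure, Cont.size, List.map_append, map_pat_zip_doMatch hlen,
        List.sum_append, List.map_cons, List.sum_cons, Action.pat, Pat.size_app]
      omega
  | alt => nomatch hk _ List.mem_cons_self

theorem AltFreeState.of_reflTransGen {st st' : St} (h : Relation.ReflTransGen Step st st')
    (hst : AltFreeState st) : AltFreeState st' := by
  induction h with
  | refl => exact hst
  | tail _ hstep ih => exact (hstep.altFreeState_measure_lt ih).1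

theorem AltFreeState.exists_terminal {st : St} (hst : AltFreeState st) :
    ∃ st', Relation.ReflTransGen Step st st' ∧ ((∃ θ, st' = .success θ) ∨ st' = .failure) := by
  induction hn : st.measure using Nat.strong_induction_on generalizing st with
  | _ n ih =>
  rcases st with θ | _ | ⟨θ, stk, k⟩
  · exact ⟨_, .refl, .inl ⟨θ, rfl⟩⟩
  · exact ⟨_, .refl, .inr rfl⟩
  · obtain ⟨st', hstep⟩ := Step.exists θ stk k
    obtain ⟨hst', hlt⟩ := hstep.altFreeState_measure_lt hst
    obtain ⟨st'', hreach, hterm⟩ := ih _ (hn ▸ hlt) hst' rfl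
    exact ⟨st'', .head hstep hreach, hterm⟩

end PyPM

open PyPM

/-- Termination for alternate-free patterns: the machine started on such a pattern
always terminates in success or failure, and the backtracking stack stays empty. -/
theorem altfree_terminates {p : Pat} {t : Tm} (haf : AltFree p) :
    (∃ st : St, Relation.ReflTransGen Step (.running emptySubst [] [.doMatch p t]) st ∧
      ((∃ θ, st = St.success θ) ∨ st = St.failure)) ∧
    (∀ (θ' : Subst) (stk : Stack) (k : Cont),
      Relation.ReflTransGen Step (.running emptySubst [] [.doMatch p t]) (.running θ' stk k) →
      stk = []) := by
  have hinit : AltFreeState (.running emptySubst [] [.doMatch p t]) :=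
    ⟨rfl, by simpa [Cont.AltFree, Action.pat]⟩
  exact ⟨hinit.exists_terminal, fun _ _ _ h => (hinit.of_reflTransGen h).1⟩
end

section
/- Completeness for alternate-free patterns: if p contains no alternates and there exists θ with θ ⊢ p ≈ t where dom(θ) equals the set of variables of p, then the machine started from (∅, [], [match p t]) reaches success(θ') for some θ' with θ' ⊢ p ≈ t. -/
namespace PyPM

theorem Matches.mono {θ θ' : Subst} {p : Pat} {t : Tm}
    (h : Matches θ p t)
    (hext : ∀ x u, VarIn x p → θ x = some u → θ' x = some u) :
    Matches θ' p t := by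
  induction h with
  | var hx => exact .var (hext _ _ .var hx)
  | app hlen hargs ih =>
    exact .app hlen (fun i h1 h2 => ih i h1 h2
      (fun x u hv hx => hext x u (.app (List.getElem_mem h1) hv) hx))
  | alt1 _ ih => exact .alt1 (ih fun x u hv hx => hext x u (.alt1 hv) hx)
  | alt2 _ ih => exact .alt2 (ih fun x u hv hx => hext x u (.alt2 hv) hx)

/-- Process a list of match actions, given a runner for each element. -/
theorem runList {θ : Subst} (l : List (Pat × Tm))
    (hrun : ∀ pt ∈ l, ∀ (θ0 : Subst) stk k, Subst.le θ0 θ →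
      ∃ θ1 : Subst, Subst.le θ0 θ1 ∧ Subst.le θ1 θ ∧
        (∀ x, VarIn x pt.1 → ∃ u, θ1 x = some u) ∧
        Relation.ReflTransGen Step (.running θ0 stk (.doMatch pt.1 pt.2 :: k))
          (.running θ1 stk k)) :
    ∀ (θ0 : Subst) stk k, Subst.le θ0 θ →
      ∃ θ1 : Subst, Subst.le θ0 θ1 ∧ Subst.le θ1 θ ∧
        (∀ x, (∃ pt ∈ l, VarIn x pt.1) → ∃ u, θ1 x = some u) ∧
        Relation.ReflTransGen Step
          (.running θ0 stk ((l.map fun pt => .doMatch pt.1 pt.2) ++ k))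
          (.running θ1 stk k) := by
  induction l with
  | nil =>
    intro θ0 stk k h0
    exact ⟨θ0, fun _ _ h => h, h0, by rintro x ⟨pt, hpt, -⟩; exact absurd hpt (by simp),
      by simpa using (Relation.ReflTransGen.refl)⟩
  | cons pt l ih =>
    intro θ0 stk k h0
    obtain ⟨θ1, h01, h1, hv1, hst1⟩ :=
      hrun pt (by simp) θ0 stk ((l.map fun pt => .doMatch pt.1 pt.2) ++ k) h0
    obtain ⟨θ2, h12, h2, hv2, hst2⟩ :=
      ih (fun q hq => hrun q (by simp [hq])) θ1 stk k h1
    refine ⟨θ2, fun x u hx => h12 x u (h01 x u hx), h2, ?_, ?_⟩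
    · rintro x ⟨q, hq, hv⟩
      rcases List.mem_cons.1 hq with rfl | hq
      · obtain ⟨u, hu⟩ := hv1 x hv
        exact ⟨u, h12 x u hu⟩
      · exact hv2 x ⟨q, hq, hv⟩
    · exact (Relation.ReflTransGen.trans (by simpa using hst1) hst2)

theorem run {θ : Subst} {p : Pat} {t : Tm} (h : Matches θ p t) (haf : AltFree p) :
    ∀ (θ0 : Subst) stk k, Subst.le θ0 θ →
      ∃ θ1 : Subst, Subst.le θ0 θ1 ∧ Subst.le θ1 θ ∧
        (∀ x, VarIn x p → ∃ u, θ1 x = some u) ∧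
        Relation.ReflTransGen Step (.running θ0 stk (.doMatch p t :: k))
          (.running θ1 stk k) := by
  induction h with
  | @var x t hx =>
    intro θ0 stk k h0
    cases hθ0 : θ0 x with
    | none =>
      refine ⟨θ0.update x t, ?_, ?_, ?_, .single (.varBind hθ0)⟩
      · intro y u hy
        simp only [Subst.update]
        by_cases hyx : y = x
        · subst hyx; rw [hθ0] at hy; cases hy
        · simp [hyx, hy]
      · intro y u hy
        simp only [Subst.update] at hy
        by_cases hyx : y = x
        · subst hyx; simp at hy; subst hy; exact hx
        · simp [hyx] at hy; exact h0 y u hy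
      · intro y hy; cases hy; exact ⟨t, by simp [Subst.update]⟩
    | some t' =>
      have : t' = t := by have := h0 x t' hθ0; rw [hx] at this; injection this with h'; exact h'.symm
      subst this
      exact ⟨θ0, fun _ _ h => h, h0, fun y hy => by cases hy; exact ⟨t', hθ0⟩,
        .single (.varBound hθ0)⟩
  | @app f ps ts hlen hargs ih =>
    rcases haf with _ | @⟨f, ps, hafps⟩
    intro θ0 stk k h0
    have hrun : ∀ pt ∈ ps.zip ts, ∀ (θ0 : Subst) stk k, Subst.le θ0 θ →
        ∃ θ1 : Subst, Subst.le θ0 θ1 ∧ Subst.le θ1 θ ∧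
          (∀ x, VarIn x pt.1 → ∃ u, θ1 x = some u) ∧
          Relation.ReflTransGen Step (.running θ0 stk (.doMatch pt.1 pt.2 :: k))
            (.running θ1 stk k) := by
      intro pt hpt
      obtain ⟨i, hi, hget⟩ := List.mem_iff_getElem.1 hpt
      rw [List.getElem_zip] at hget
      have hi1 : i < ps.length := by simpa using (List.lt_length_left_of_zip hi)
      have hi2 : i < ts.length := hlen ▸ hi1
      have := ih i hi1 hi2 (hafps _ (List.getElem_mem hi1))
      rw [← hget] at *
      exact this
    obtain ⟨θ1, h01, h1, hv, hst⟩ := runList (ps.zip ts) hrun θ0 stk k h0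
    refine ⟨θ1, h01, h1, ?_, .trans (.single (.fn hlen)) hst⟩
    intro x hx
    rcases hx with _ | @⟨f, ps, q, hq, hv'⟩
    obtain ⟨i, hi, hget⟩ := List.mem_iff_getElem.1 hq
    refine hv x ⟨(ps[i], ts[i]'(by rw [← hlen]; exact hi)), ?_, by simpa [hget] using hv'⟩
    exact List.mem_iff_getElem.2 ⟨i, by simp [List.length_zip]; omega, by rw [List.getElem_zip]⟩
  | alt1 _ _ => cases haf
  | alt2 _ _ => cases haf

end PyPM

open PyPM

/-- Completeness for alternate-free patterns. -/
theorem altfree_completeness {p : Pat} {t : Tm}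
    (haf : AltFree p)
    (hex : ∃ θ : Subst, (∀ x : String, (∃ u, θ x = some u) ↔ VarIn x p) ∧ Matches θ p t) :
    ∃ θ' : Subst, Relation.ReflTransGen Step (.running emptySubst [] [.doMatch p t])
        (.success θ') ∧ Matches θ' p t := by
  obtain ⟨θ, hdom, hm⟩ := hex
  obtain ⟨θ1, _, h1, hv, hst⟩ := run hm haf emptySubst [] []
    (fun x u h => absurd h (by simp [emptySubst]))
  refine ⟨θ1, .trans hst (.single .success), ?_⟩
  refine hm.mono fun x u hv' hx => ?_
  obtain ⟨w, hw⟩ := hv x hv'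
  have := h1 x w hw
  rw [hx] at this; injection this with h'; rw [h']; exact hw
end

section
/- Backtrack stack invariant: define a running state running(θ, stk, k) to be coherent with respect to the original goal (p₀, t₀) if success of any stack frame's saved continuation from its saved substitution implies a declarative match of p₀ against t₀. Then coherence is preserved by every step of the machine: if running(θ,stk,k) is coherent and steps to running(θ',stk',k'), the latter is coherent; and if a coherent state steps to success(θ), then θ ⊢ p₀ ≈ t₀. -/
open PyPM

/-- θ satisfies a continuation k if every match action in k holds declaratively. -/
def SatCont (θ : Subst) (k : Cont) : Prop :=
  ∀ (p : Pat) (t : Tm), Action.doMatch p t ∈ k → Matches θ p t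

/-- Coherence of a running state with respect to the original goal (p₀, t₀). -/
def Coherent (p₀ : Pat) (t₀ : Tm) (θ : Subst) (stk : Stack) (k : Cont) : Prop :=
  (∀ θ' : Subst, Subst.le θ θ' → SatCont θ' k → Matches θ' p₀ t₀) ∧
  (∀ fr ∈ stk, ∀ θ' : Subst, Subst.le fr.1 θ' → SatCont θ' fr.2 → Matches θ' p₀ t₀)

namespace PyPM

namespace Subst

theorem le_refl_s17 (θ : Subst) : θ.le θ := fun _ _ h => h

theorem le.trans {θ₁ θ₂ θ₃ : Subst} (h₁₂ : θ₁.le θ₂) (h₂₃ : θ₂.le θ₃) : θ₁.le θ₃ :=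
  fun x t h => h₂₃ x t (h₁₂ x t h)

@[simp]
theorem update_self_s17 (θ : Subst) (x : String) (t : Tm) : θ.update x t x = some t := by
  simp [update]

theorem le_update_s17 {θ : Subst} {x : String} (hx : θ x = none) (t : Tm) : θ.le (θ.update x t) := by
  intro y s hy
  have hyx : y ≠ x := by rintro rfl; simp [hx] at hy
  simpa [update, hyx] using hy

end Subst

end PyPM

@[simp]
theorem satCont_nil (θ : Subst) : SatCont θ [] := by
  simp [SatCont]

@[simp]
theorem satCont_cons {θ : Subst} {p : Pat} {t : Tm} {k : Cont} :
    SatCont θ (.doMatch p t :: k) ↔ Matches θ p t ∧ SatCont θ k := by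
  simp [SatCont, or_imp, forall_and]

@[simp]
theorem satCont_append {θ : Subst} {k₁ k₂ : Cont} :
    SatCont θ (k₁ ++ k₂) ↔ SatCont θ k₁ ∧ SatCont θ k₂ := by
  simp only [SatCont, List.mem_append, or_imp, forall_and]

theorem matches_app_of_satCont_zip {θ : Subst} {f : String} {ps : List Pat} {ts : List Tm}
    (hlen : ps.length = ts.length)
    (h : SatCont θ ((ps.zip ts).map fun pt => .doMatch pt.1 pt.2)) :
    Matches θ (.app f ps) (.app f ts) := by
  refine Matches.app hlen fun i h₁ h₂ => h _ _ (List.mem_map.mpr ⟨(ps[i], ts[i]), ?_, rfl⟩)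
  exact List.mem_iff_getElem.mpr ⟨i, by simp [h₁, h₂], by simp⟩

def Entails (p₀ : Pat) (t₀ : Tm) (θ : Subst) (k : Cont) : Prop :=
  ∀ θ' : Subst, θ.le θ' → SatCont θ' k → Matches θ' p₀ t₀

theorem Entails.mono {p₀ : Pat} {t₀ : Tm} {θ₁ θ₂ : Subst} {k₁ k₂ : Cont}
    (h : Entails p₀ t₀ θ₁ k₁)
    (hk : ∀ θ' : Subst, θ₂.le θ' → SatCont θ' k₂ → θ₁.le θ' ∧ SatCont θ' k₁) :
    Entails p₀ t₀ θ₂ k₂ := fun θ' hle hsat =>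
  let ⟨hle₁, hsat₁⟩ := hk θ' hle hsat
  h θ' hle₁ hsat₁

theorem coherent_iff {p₀ : Pat} {t₀ : Tm} {θ : Subst} {stk : Stack} {k : Cont} :
    Coherent p₀ t₀ θ stk k ↔ Entails p₀ t₀ θ k ∧ ∀ fr ∈ stk, Entails p₀ t₀ fr.1 fr.2 :=
  Iff.rfl

/-- Coherence extended to all machine states, so that both halves of the invariant become a
single preservation property of `Step`. -/
def StateCoherent (p₀ : Pat) (t₀ : Tm) : St → Prop
  | .success θ => Matches θ p₀ t₀
  | .failure => True
  | .running θ stk k => Coherent p₀ t₀ θ stk k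

theorem stateCoherent_backtrack {p₀ : Pat} {t₀ : Tm} {stk : Stack}
    (h : ∀ fr ∈ stk, Entails p₀ t₀ fr.1 fr.2) : StateCoherent p₀ t₀ (backtrack stk) := by
  cases stk with
  | nil => trivial
  | cons fr stk =>
    simp only [List.forall_mem_cons] at h
    exact coherent_iff.mpr h

/-- Each step replaces a frame by one whose solutions are solutions of the old frame (a checked
variable binding, a decomposed application, or one branch of an alternative), and backtracking
only resumes frames that were already coherent. -/
theorem PyPM.Step.stateCoherent {p₀ : Pat} {t₀ : Tm} {s s' : St} (hstep : Step s s')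
    (hs : StateCoherent p₀ t₀ s) : StateCoherent p₀ t₀ s' := by
  cases hstep with
  | success => exact hs.1 _ (Subst.le_refl_s17 _) (satCont_nil _)
  | @varBind θ _ x t k hx =>
    refine ⟨Entails.mono hs.1 fun θ' hle hsat => ⟨(Subst.le_update_s17 hx t).trans hle, ?_⟩, hs.2⟩
    exact satCont_cons.mpr ⟨.var (hle x t (Subst.update_self_s17 θ x t)), hsat⟩
  | varBound hx =>
    refine ⟨Entails.mono hs.1 fun θ' hle hsat => ⟨hle, ?_⟩, hs.2⟩
    exact satCont_cons.mpr ⟨.var (hle _ _ hx), hsat⟩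
  | varConflict => exact stateCoherent_backtrack hs.2
  | fn hlen =>
    refine ⟨Entails.mono hs.1 fun θ' hle hsat => ⟨hle, ?_⟩, hs.2⟩
    obtain ⟨hargs, hk⟩ := satCont_append.mp hsat
    exact satCont_cons.mpr ⟨matches_app_of_satCont_zip hlen hargs, hk⟩
  | fnConflict => exact stateCoherent_backtrack hs.2
  | alt =>
    have hleft := Entails.mono hs.1 fun θ' hle hsat =>
      have ⟨hp, hk⟩ := satCont_cons.mp hsat
      ⟨hle, satCont_cons.mpr ⟨.alt1 hp, hk⟩⟩
    have hright := Entails.mono hs.1 fun θ' hle hsat =>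
      have ⟨hp', hk⟩ := satCont_cons.mp hsat
      ⟨hle, satCont_cons.mpr ⟨.alt2 hp', hk⟩⟩
    exact ⟨hleft, List.forall_mem_cons.mpr ⟨hright, hs.2⟩⟩

/-- Coherence is preserved by every step, and a coherent state stepping to success
yields a declarative match of the original goal. -/
theorem coherence_invariant (p₀ : Pat) (t₀ : Tm) :
    (∀ (θ θ' : Subst) (stk stk' : Stack) (k k' : Cont),
      Coherent p₀ t₀ θ stk k →
      Step (.running θ stk k) (.running θ' stk' k') →
      Coherent p₀ t₀ θ' stk' k') ∧
    (∀ (θ : Subst) (stk : Stack) (k : Cont) (θs : Subst),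
      Coherent p₀ t₀ θ stk k →
      Step (.running θ stk k) (.success θs) →
      Matches θs p₀ t₀) :=
  ⟨fun _ _ _ _ _ _ hc hstep => hstep.stateCoherent hc,
    fun _ _ _ _ hc hstep => hstep.stateCoherent hc⟩
end
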